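/- arXiv:1902.02575 — 10 statements merged into one kernel-verified Lean document; each statement's English description precedes it below -/
import Mathlib

section
/- The eigenvalues of the Seidel matrix of the complete k-partite graph K_{p_1,...,p_k} other than -1 (with multiplicity n-k) are exactly the roots of the polynomial f(x) = ∏_{i=1}^k (x - 2p_i + 1) + Σ_{j=1}^k p_j ∏_{i≠j} (x - 2p_i + 1); i.e., the characteristic polynomial of the Seidel matrix equals (x+1)^{n-k} f(x). -/
/-!
Write `S` for the Seidel matrix, `P` for the `n × k` indicator matrix of the parts and `J` for
the all-ones matrix. Then `S + 1 = 2 P Pᵀ - J = P N` with `N = (2 - J) Pᵀ`, so the characteristic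
polynomials of `P N` and `N P` differ by the factor `X ^ (n - k)`. The `k × k` matrix
`N P = 2 diag(p) - 1 pᵀ` is diagonal plus rank one, and the matrix determinant lemma gives its
characteristic polynomial `∏ (X - 2 pᵢ) + ∑ⱼ pⱼ ∏_{i ≠ j} (X - 2 pᵢ)`. Substituting `X + 1` for
`X` undoes the shift by `1`.
-/

open Polynomial Matrix Finset

open scoped Classical in
/-- The Seidel matrix of a simple graph: 0 on the diagonal, -1 for adjacent pairs,
1 for distinct non-adjacent pairs. -/
noncomputable def seidel {V : Type*} [Fintype V] (G : SimpleGraph V) : Matrix V V ℝ :=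
  fun i j => if i = j then 0 else if G.Adj i j then -1 else 1

/-- The complete multipartite graph with parts of sizes `p 0, ..., p (k-1)`. -/
def completeMultipartite {k : ℕ} (p : Fin k → ℕ) : SimpleGraph (Σ i : Fin k, Fin (p i)) where
  Adj u v := u.1 ≠ v.1
  symm := ⟨fun _ _ h => h.symm⟩
  loopless := ⟨fun _ h => h rfl⟩

namespace Matrix

variable {n : Type*} [Fintype n] [DecidableEq n]

theorem det_diagonal_add_vecMulVec_of_ne_zero {K : Type*} [Field K] {d : n → K}
    (hd : ∀ i, d i ≠ 0) (u v : n → K) :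
    (diagonal d + vecMulVec u v).det =
      ∏ i, d i + ∑ j, u j * v j * ∏ i ∈ univ.erase j, d i := by
  have hfactor : diagonal d * (1 + vecMulVec (u / d) v) = diagonal d + vecMulVec u v := by
    rw [Matrix.mul_add, Matrix.mul_one]
    congr 1
    ext i j
    simp [vecMulVec_apply, ← mul_assoc, mul_div_cancel₀ _ (hd i)]
  rw [← hfactor, det_mul, det_diagonal, vecMulVec_eq (ι := Unit),
    det_one_add_replicateCol_mul_replicateRow, mul_add, mul_one, dotProduct, mul_sum]
  congr 1
  refine sum_congr rfl fun j _ => ?_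
  rw [← mul_prod_erase univ d (mem_univ j), Pi.div_apply]
  field_simp [hd j]

theorem det_diagonal_add_vecMulVec_of_ne_zero' {R : Type*} [CommRing R] [IsDomain R]
    {d : n → R} (hd : ∀ i, d i ≠ 0) (u v : n → R) :
    (diagonal d + vecMulVec u v).det =
      ∏ i, d i + ∑ j, u j * v j * ∏ i ∈ univ.erase j, d i := by
  let φ := algebraMap R (FractionRing R)
  have hφ : Function.Injective φ := IsFractionRing.injective R (FractionRing R)
  have hK := det_diagonal_add_vecMulVec_of_ne_zero
    (fun i => (map_ne_zero_iff φ hφ).2 (hd i)) (φ ∘ u) (φ ∘ v)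
  have hmap : (vecMulVec u v).map φ = vecMulVec (φ ∘ u) (φ ∘ v) := by
    ext
    simp [vecMulVec_apply]
  apply hφ
  rw [RingHom.map_det, RingHom.mapMatrix_apply, Matrix.map_add φ (map_add φ),
    diagonal_map (map_zero φ), hmap]
  simp only [map_add, map_sum, map_mul, map_prod]
  exact hK

theorem charpoly_diagonal_sub_vecMulVec {R : Type*} [CommRing R] [IsDomain R] (a u v : n → R) :
    (diagonal a - vecMulVec u v).charpoly =
      ∏ i, (X - C (a i)) + ∑ j, C (u j * v j) * ∏ i ∈ univ.erase j, (X - C (a i)) := by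
  have hchar : charmatrix (diagonal a - vecMulVec u v) =
      diagonal (fun i => X - C (a i)) + vecMulVec (C ∘ u) (C ∘ v) := by
    refine Matrix.ext fun i j => ?_
    rcases eq_or_ne i j with rfl | hij
    · simp only [charmatrix_apply_eq, sub_apply, add_apply, diagonal_apply_eq, vecMulVec_apply,
        Function.comp_apply, map_sub, map_mul]
      ring
    · simp [hij, vecMulVec_apply]
  rw [charpoly, hchar, det_diagonal_add_vecMulVec_of_ne_zero' fun i => X_sub_C_ne_zero (a i)]
  simp

end Matrix

section CompleteMultipartite

variable {k : ℕ} (p : Fin k → ℕ)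

def partIndicator : Matrix (Σ i : Fin k, Fin (p i)) (Fin k) ℝ :=
  of fun x i => if x.1 = i then 1 else 0

def seidelCofactor : Matrix (Fin k) (Σ i : Fin k, Fin (p i)) ℝ :=
  of fun i x => (if x.1 = i then 2 else 0) - 1

theorem seidel_completeMultipartite_eq :
    seidel (completeMultipartite p) = partIndicator p * seidelCofactor p - scalar _ 1 := by
  ext x y
  by_cases hxy : x = y
  · subst hxy
    norm_num [seidel, partIndicator, seidelCofactor, mul_apply]
  by_cases hpart : x.1 = y.1
  · norm_num [seidel, completeMultipartite, partIndicator, seidelCofactor, mul_apply, hxy, hpart]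
  · simp [seidel, completeMultipartite, partIndicator, seidelCofactor, mul_apply, hxy, hpart,
      Ne.symm hpart]

theorem seidelCofactor_mul_partIndicator :
    seidelCofactor p * partIndicator p =
      diagonal (fun i => 2 * (p i : ℝ)) - vecMulVec 1 (fun i => (p i : ℝ)) := by
  ext i j
  rcases eq_or_ne i j with rfl | hij
  · simp [partIndicator, seidelCofactor, mul_apply, Fintype.sum_sigma, mul_comm]
  · simp [partIndicator, seidelCofactor, mul_apply, Fintype.sum_sigma, hij, hij.symm]

end CompleteMultipartite

/-- The characteristic polynomial of the Seidel matrix of `K_{p_1,...,p_k}` equals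
`(x+1)^{n-k} f(x)` where
`f(x) = ∏_i (x - 2p_i + 1) + Σ_j p_j ∏_{i ≠ j} (x - 2p_i + 1)`. -/
theorem seidel_charpoly_completeMultipartite {k : ℕ} (p : Fin k → ℕ)
    (hpos : ∀ i, 1 ≤ p i) :
    (seidel (completeMultipartite p)).charpoly =
      (X + 1) ^ ((∑ i, p i) - k) *
        (∏ i, (X - C (2 * (p i : ℝ) - 1)) +
          ∑ j, C ((p j : ℝ)) * ∏ i ∈ univ.erase j, (X - C (2 * (p i : ℝ) - 1))) := by
  have hcard : Fintype.card (Fin k) ≤ Fintype.card (Σ i : Fin k, Fin (p i)) := by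
    simpa using card_nsmul_le_sum univ (fun i => p i) 1 fun i _ => hpos i
  have hshift (a : ℝ) : (X + 1 - C a : ℝ[X]) = X - C (a - 1) := by
    rw [C_sub, C_1]
    ring
  rw [seidel_completeMultipartite_eq, charpoly_sub_scalar, charpoly_mul_comm_of_le _ _ hcard,
    seidelCofactor_mul_partIndicator, charpoly_diagonal_sub_vecMulVec]
  simp only [Fintype.card_sigma, Fintype.card_fin, mul_comp, pow_comp, X_comp, add_comp,
    Polynomial.sum_comp, Polynomial.prod_comp, sub_comp, C_comp, Pi.one_apply, one_mul, map_one,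
    hshift]
end

section
/- Let p_1 ≥ ... ≥ p_k ≥ 1 and q_1 ≥ ... ≥ q_k ≥ 1 be two different k-tuples with k ≥ 3 and equal sums Σp_i = Σq_i. Then the complete k-partite graphs K_{p_1,...,p_k} and K_{q_1,...,q_k} are not switching equivalent: there is no subset U of vertices of K_{p_1,...,p_k} such that switching with respect to U yields a graph isomorphic to K_{q_1,...,q_k}. -/
open SimpleGraph

/-- Seidel switching of a graph `G` with respect to a vertex subset `U`: adjacency
inside `U` and inside its complement is unchanged, while adjacency between `U` and
its complement is complemented. -/
def switch {V : Type*} (G : SimpleGraph V) (U : Set V) : SimpleGraph V where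
  Adj u v := u ≠ v ∧
    (((u ∈ U ↔ v ∈ U) ∧ G.Adj u v) ∨ (¬(u ∈ U ↔ v ∈ U) ∧ ¬ G.Adj u v))
  symm := by
    constructor
    rintro u v ⟨h1, h2⟩
    refine ⟨h1.symm, ?_⟩
    rcases h2 with ⟨ha, hb⟩ | ⟨ha, hb⟩
    · exact Or.inl ⟨ha.symm, hb.symm⟩
    · exact Or.inr ⟨fun c => ha c.symm, fun c => hb c.symm⟩
  loopless := ⟨fun _ h => h.1 rfl⟩

/-!
Switching changes the adjacency of exactly those pairs that cross `U`, and every triangle of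
vertices has an even number of crossing pairs, so the parity of the number of edges within
each triple of vertices is a switching invariant. In `K_{p_1,...,p_k}` a triple is odd exactly
when its vertices lie in three different parts, so when `k ≥ 3` two vertices are in the same
part iff they lie in no odd triple. Hence an isomorphism from a switching of `K_p` onto `K_q`
maps parts onto parts, `p` is a rearrangement of `q`, and sorting forces `p = q`.
-/

variable {V W : Type*}

def IsOddTriple (G : SimpleGraph V) (u v w : V) : Prop :=
  Xor (Xor (G.Adj u v) (G.Adj u w)) (G.Adj v w)

theorem IsOddTriple.pairwise_ne {G : SimpleGraph V} {u v w : V} (h : IsOddTriple G u v w) :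
    u ≠ v ∧ u ≠ w ∧ v ≠ w := by
  refine ⟨?_, ?_, ?_⟩ <;> rintro rfl <;> grind [IsOddTriple, G.adj_comm, G.irrefl]

theorem switch_adj_iff_xor (G : SimpleGraph V) (U : Set V) {u v : V} (huv : u ≠ v) :
    (switch G U).Adj u v ↔ Xor (G.Adj u v) ¬(u ∈ U ↔ v ∈ U) := by
  simp only [switch, huv, ne_eq, not_false_eq_true, true_and]
  grind

theorem isOddTriple_switch_iff (G : SimpleGraph V) (U : Set V) (u v w : V) :
    IsOddTriple (switch G U) u v w ↔ IsOddTriple G u v w := by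
  have of_pairwise_ne (huv : u ≠ v) (huw : u ≠ w) (hvw : v ≠ w) :
      IsOddTriple (switch G U) u v w ↔ IsOddTriple G u v w := by
    simp only [IsOddTriple, switch_adj_iff_xor G U huv, switch_adj_iff_xor G U huw,
      switch_adj_iff_xor G U hvw]
    grind
  constructor <;> intro h <;> obtain ⟨huv, huw, hvw⟩ := h.pairwise_ne
  exacts [(of_pairwise_ne huv huw hvw).1 h, (of_pairwise_ne huv huw hvw).2 h]

theorem SimpleGraph.Iso.isOddTriple_iff {G : SimpleGraph V} {H : SimpleGraph W} (φ : G ≃g H)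
    (u v w : V) : IsOddTriple H (φ u) (φ v) (φ w) ↔ IsOddTriple G u v w := by
  simp only [IsOddTriple, φ.map_adj_iff]

theorem Antitone.eq_of_eq_comp_perm {α : Type*} [PartialOrder α] {n : ℕ} {f g : Fin n → α}
    (hf : Antitone f) (hg : Antitone g) {σ : Equiv.Perm (Fin n)} (h : f = g ∘ σ) : f = g :=
  h.trans (Tuple.unique_antitone (σ := σ) (τ := 1) (h ▸ hf) hg)

section completeMultipartite

variable {k : ℕ} {p q : Fin k → ℕ}

theorem isOddTriple_completeMultipartite_iff (u v w : Σ i, Fin (p i)) :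
    IsOddTriple (completeMultipartite p) u v w ↔ u.1 ≠ v.1 ∧ u.1 ≠ w.1 ∧ v.1 ≠ w.1 := by
  simp only [IsOddTriple, completeMultipartite]
  grind

theorem completeMultipartite_fst_eq_iff (hk : 3 ≤ k) (hp : ∀ i, 1 ≤ p i) (u v : Σ i, Fin (p i)) :
    u.1 = v.1 ↔ ∀ w, ¬ IsOddTriple (completeMultipartite p) u v w := by
  simp only [isOddTriple_completeMultipartite_iff]
  refine ⟨fun h w hw => hw.1 h, fun h => ?_⟩
  by_contra huv
  obtain ⟨i, hi⟩ : (({u.1, v.1} : Finset (Fin k))ᶜ).Nonempty := by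
    rw [← Finset.card_pos, Finset.card_compl, Fintype.card_fin]
    have := Finset.card_le_two (a := u.1) (b := v.1)
    omega
  simp only [Finset.mem_compl, Finset.mem_insert, Finset.mem_singleton, not_or] at hi
  exact h ⟨i, ⟨0, hp i⟩⟩ ⟨huv, Ne.symm hi.1, Ne.symm hi.2⟩

theorem fst_eq_iff_of_isOddTriple_iff (hk : 3 ≤ k) (hp : ∀ i, 1 ≤ p i) (hq : ∀ i, 1 ≤ q i)
    (e : (Σ i, Fin (p i)) ≃ Σ i, Fin (q i))
    (he : ∀ u v w, IsOddTriple (completeMultipartite q) (e u) (e v) (e w) ↔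
      IsOddTriple (completeMultipartite p) u v w) (u v : Σ i, Fin (p i)) :
    (e u).1 = (e v).1 ↔ u.1 = v.1 := by
  rw [completeMultipartite_fst_eq_iff hk hq, completeMultipartite_fst_eq_iff hk hp,
    e.symm.forall_congr_left]
  simp only [Equiv.symm_symm, he]

theorem exists_perm_eq_comp_of_fst_eq_iff (hp : ∀ i, 1 ≤ p i)
    (e : (Σ i, Fin (p i)) ≃ Σ i, Fin (q i)) (he : ∀ u v, (e u).1 = (e v).1 ↔ u.1 = v.1) :
    ∃ σ : Equiv.Perm (Fin k), p = q ∘ σ := by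
  let σ : Fin k → Fin k := fun i => (e ⟨i, ⟨0, hp i⟩⟩).1
  have hσ : ∀ u, (e u).1 = σ u.1 := fun u => (he _ _).2 rfl
  have hσinj : σ.Injective := fun i j hij => (he _ _).1 hij
  refine ⟨Equiv.ofBijective σ (Finite.injective_iff_bijective.mp hσinj), funext fun i => ?_⟩
  have fiber : {u : Σ j, Fin (p j) // u.1 = i} ≃ {v : Σ j, Fin (q j) // v.1 = σ i} :=
    e.subtypeEquiv fun u => by rw [hσ, hσinj.eq_iff]
  simpa using Fintype.card_congr ((Equiv.sigmaSubtype i).symm.trans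
    (fiber.trans (Equiv.sigmaSubtype (σ i))))

end completeMultipartite

theorem completeMultipartite_not_switching_equivalent_general {k : ℕ} (hk : 3 ≤ k)
    (p q : Fin k → ℕ) (hp : Antitone p) (hq : Antitone q)
    (hp1 : ∀ i, 1 ≤ p i) (hq1 : ∀ i, 1 ≤ q i) (hne : p ≠ q) :
    ¬ ∃ U : Set (Σ i : Fin k, Fin (p i)),
        Nonempty (switch (completeMultipartite p) U ≃g completeMultipartite q) := by
  rintro ⟨U, ⟨φ⟩⟩
  have hparts := fst_eq_iff_of_isOddTriple_iff hk hp1 hq1 φ.toEquiv fun u v w =>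
    (φ.isOddTriple_iff u v w).trans (isOddTriple_switch_iff _ U u v w)
  obtain ⟨σ, hσ⟩ := exists_perm_eq_comp_of_fst_eq_iff hp1 φ.toEquiv hparts
  exact hne (hp.eq_of_eq_comp_perm hq hσ)

/-- Two complete `k`-partite graphs, `k ≥ 3`, with different (sorted) part-size
tuples of equal sum are not switching equivalent: no switching of `K_{p_1,...,p_k}`
is isomorphic to `K_{q_1,...,q_k}`. -/
theorem completeMultipartite_not_switching_equivalent {k : ℕ} (hk : 3 ≤ k)
    (p q : Fin k → ℕ) (hp : Antitone p) (hq : Antitone q)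
    (hp1 : ∀ i, 1 ≤ p i) (hq1 : ∀ i, 1 ≤ q i) (hne : p ≠ q)
    (hsum : ∑ i, p i = ∑ i, q i) :
    ¬ ∃ U : Set (Σ i : Fin k, Fin (p i)),
        Nonempty (switch (completeMultipartite p) U ≃g completeMultipartite q) :=
  completeMultipartite_not_switching_equivalent_general hk p q hp hq hp1 hq1 hne
end

section
/- Complete tripartite graphs K_{x,y,z} and K_{p,q,r} have the same Seidel spectrum if and only if x + y + z = p + q + r and xyz = pqr. -/
open Polynomial Matrix

/-!
Let `S` be the Seidel matrix of a complete multipartite graph with `n` vertices and `k` parts and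
`U` its vertex–part incidence matrix. Then `S + 1 = U * W`, where `W i v = ±1` according as `v`
lies in part `i` or not. By `Matrix.charpoly_mul_comm'` the spectrum of `S` is therefore
`-1` (with multiplicity `n - k`) together with the eigenvalues of `W * U - 1`, where
`W * U` is the `k × k` quotient matrix `Q i j = ±p j`. For three parts `Q` has trace `n`,
vanishing principal `2 × 2` minors and determinant `-4abc`, so `χ Q = X³ - n X² + 4abc`:
cospectrality is equality of `n` (the degree) and of `abc` (read off by evaluating at `0`).
-/

variable {k : ℕ}

lemma seidel_completeMultipartite_apply (p : Fin k → ℕ) (u v : Σ i, Fin (p i)) :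
    seidel (completeMultipartite p) u v = if u = v then 0 else if u.1 = v.1 then 1 else -1 := by
  by_cases huv : u = v
  · simp [seidel, huv]
  · by_cases hpart : u.1 = v.1 <;> simp [seidel, completeMultipartite, huv, hpart]

def partMatrix (p : Fin k → ℕ) : Matrix (Σ i, Fin (p i)) (Fin k) ℝ :=
  of fun v i => if v.1 = i then 1 else 0

def signedPartMatrix (p : Fin k → ℕ) : Matrix (Fin k) (Σ i, Fin (p i)) ℝ :=
  of fun i v => if v.1 = i then 1 else -1

def seidelQuotient (p : Fin k → ℕ) : Matrix (Fin k) (Fin k) ℝ :=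
  of fun i j => if i = j then (p j : ℝ) else -p j

lemma seidel_completeMultipartite_eq_s11 (p : Fin k → ℕ) :
    seidel (completeMultipartite p) = partMatrix p * signedPartMatrix p - 1 := by
  ext u v
  rw [seidel_completeMultipartite_apply, Matrix.sub_apply, mul_apply, Finset.sum_eq_single u.1]
  · by_cases huv : u = v
    · subst huv
      simp [partMatrix, signedPartMatrix]
    · by_cases hpart : u.1 = v.1 <;>
        simp [huv, hpart, eq_comm, partMatrix, signedPartMatrix, one_apply_ne huv]
  · intro i _ hi
    simp [partMatrix, Ne.symm hi]
  · simp

lemma signedPartMatrix_mul_partMatrix (p : Fin k → ℕ) :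
    signedPartMatrix p * partMatrix p = seidelQuotient p := by
  ext i j
  rw [mul_apply, ← Finset.univ_sigma_univ, Finset.sum_sigma, Finset.sum_eq_single j]
  · by_cases hij : i = j <;> simp [signedPartMatrix, partMatrix, seidelQuotient, hij, eq_comm]
  · intro l _ hl
    simp [partMatrix, hl]
  · simp

theorem charpoly_seidel_completeMultipartite (p : Fin k → ℕ) :
    (X + 1) ^ k * (seidel (completeMultipartite p)).charpoly =
      (X + 1) ^ (∑ i, p i) * (seidelQuotient p).charpoly.comp (X + 1) := by
  have h := congrArg (·.comp (X + C 1)) (charpoly_mul_comm' (partMatrix p) (signedPartMatrix p))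
  simp only [mul_comp, pow_comp, X_comp, Fintype.card_fin, Fintype.card_sigma, map_one,
    signedPartMatrix_mul_partMatrix] at h
  rw [seidel_completeMultipartite_eq_s11, ← map_one (scalar _), charpoly_sub_scalar, map_one, h]

theorem charpoly_seidelQuotient_three (a b c : ℕ) :
    (seidelQuotient ![a, b, c]).charpoly =
      X ^ 3 - C ((a + b + c : ℕ) : ℝ) * X ^ 2 + C (4 * ((a * b * c : ℕ) : ℝ)) := by
  rw [charpoly, det_fin_three]
  simp [seidelQuotient, map_ofNat]
  ring

theorem charpoly_seidel_completeTripartite (a b c : ℕ) :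
    (X + 1) ^ 3 * (seidel (completeMultipartite ![a, b, c])).charpoly =
      (X + 1) ^ (a + b + c) * ((X + 1) ^ 3 - C ((a + b + c : ℕ) : ℝ) * (X + 1) ^ 2
        + C (4 * ((a * b * c : ℕ) : ℝ))) := by
  rw [charpoly_seidel_completeMultipartite, Fin.sum_univ_three, charpoly_seidelQuotient_three]
  simp only [sub_comp, add_comp, mul_comp, pow_comp, X_comp, C_comp, cons_val_zero, cons_val_one,
    cons_val_two, head_cons, tail_cons]

theorem tripartite_seidel_cospectral_iff_general (x y z p q r : ℕ) :
    (seidel (completeMultipartite ![x, y, z])).charpoly =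
      (seidel (completeMultipartite ![p, q, r])).charpoly ↔
    (x + y + z = p + q + r ∧ x * y * z = p * q * r) := by
  constructor
  · intro h
    have hcard : x + y + z = p + q + r := by
      simpa [charpoly_natDegree_eq_dim, Fintype.card_sigma, Fin.sum_univ_three] using
        congrArg natDegree h
    refine ⟨hcard, ?_⟩
    have h0 := congrArg (eval 0) (congrArg ((X + 1) ^ 3 * ·) h)
    simp only [charpoly_seidel_completeTripartite, hcard] at h0
    have hprod : (x * y * z : ℝ) = p * q * r := by simpa using h0
    exact_mod_cast hprod
  · rintro ⟨hcard, hprod⟩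
    rw [← mul_right_inj' (pow_ne_zero 3 (X_add_C_ne_zero (1 : ℝ))), map_one,
      charpoly_seidel_completeTripartite, charpoly_seidel_completeTripartite, hcard, hprod]

/-- The complete tripartite graphs `K_{x,y,z}` and `K_{p,q,r}` have the same Seidel
spectrum (equal characteristic polynomials of their Seidel matrices) if and only if
`x + y + z = p + q + r` and `xyz = pqr`. -/
theorem tripartite_seidel_cospectral_iff (x y z p q r : ℕ)
    (hx : 1 ≤ x) (hy : 1 ≤ y) (hz : 1 ≤ z) (hp : 1 ≤ p) (hq : 1 ≤ q) (hr : 1 ≤ r) :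
    (seidel (completeMultipartite ![x, y, z])).charpoly =
      (seidel (completeMultipartite ![p, q, r])).charpoly ↔
    (x + y + z = p + q + r ∧ x * y * z = p * q * r) :=
  tripartite_seidel_cospectral_iff_general x y z p q r
end

section
/- For every positive integer k, the triples (k(2k-1), k(2k-1), 1) and ((2k-1)², k, k) have the same sum and the same product; consequently the complete tripartite graphs K_{k(2k-1),k(2k-1),1} and K_{(2k-1)²,k,k} are Seidel cospectral, and for k > 1 these triples are different. -/
open Polynomial Matrix

namespace completeMultipartite

variable {r : ℕ}

def partIndicator (p : Fin r → ℕ) : Matrix (Σ i : Fin r, Fin (p i)) (Fin r) ℝ :=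
  fun u j => if u.1 = j then 1 else 0

def partSign (r : ℕ) : Matrix (Fin r) (Fin r) ℝ :=
  of fun i j => if i = j then 1 else -1

lemma partIndicator_mul_mul_transpose_apply (p : Fin r → ℕ) (M : Matrix (Fin r) (Fin r) ℝ)
    (u v : Σ i : Fin r, Fin (p i)) :
    (partIndicator p * M * (partIndicator p)ᵀ) u v = M u.1 v.1 := by
  simp [Matrix.mul_apply, partIndicator]

lemma seidel_add_one (p : Fin r → ℕ) : seidel (completeMultipartite p) + 1 =
    partIndicator p * partSign r * (partIndicator p)ᵀ := by
  ext u v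
  rw [Matrix.add_apply, partIndicator_mul_mul_transpose_apply]
  by_cases huv : u = v
  · subst huv
    simp [seidel, partSign]
  · by_cases hpart : u.1 = v.1 <;> simp [huv, hpart, seidel, partSign, completeMultipartite]

lemma transpose_partIndicator_mul_self (p : Fin r → ℕ) :
    (partIndicator p)ᵀ * partIndicator p = diagonal fun i => (p i : ℝ) := by
  ext i j
  rw [Matrix.mul_apply, ← Finset.univ_sigma_univ, Finset.sum_sigma]
  by_cases hij : i = j
  · subst hij
    simp [partIndicator]
  · simp [partIndicator, hij, Ne.symm hij]

lemma X_pow_mul_charpoly_seidel_add_one (p : Fin r → ℕ) :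
    X ^ r * (seidel (completeMultipartite p) + 1).charpoly =
      X ^ (∑ i, p i) * (partSign r * diagonal fun i => (p i : ℝ)).charpoly := by
  have h := charpoly_mul_comm' (partIndicator p) (partSign r * (partIndicator p)ᵀ)
  rw [Matrix.mul_assoc, transpose_partIndicator_mul_self, ← Matrix.mul_assoc, ← seidel_add_one,
    Fintype.card_sigma] at h
  simpa only [Fintype.card_fin] using h

lemma charpoly_seidel_eq_of_charpoly_eq {p q : Fin r → ℕ} (hsum : ∑ i, p i = ∑ i, q i)
    (h : (partSign r * diagonal fun i => (p i : ℝ)).charpoly =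
      (partSign r * diagonal fun i => (q i : ℝ)).charpoly) :
    (seidel (completeMultipartite p)).charpoly = (seidel (completeMultipartite q)).charpoly := by
  have hshift : (seidel (completeMultipartite p) + 1).charpoly =
      (seidel (completeMultipartite q) + 1).charpoly := by
    apply (isRegular_X_pow r).left
    simp only [X_pow_mul_charpoly_seidel_add_one, hsum, h]
  have hsub {s : ℕ} (t : Fin s → ℕ) : seidel (completeMultipartite t) =
      seidel (completeMultipartite t) + 1 - scalar _ 1 := by simp
  rw [hsub p, hsub q, charpoly_sub_scalar, charpoly_sub_scalar, hshift]

lemma charpoly_partSign_mul_diagonal_fin_three (d : Fin 3 → ℝ) :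
    (partSign 3 * diagonal d).charpoly =
      X ^ 3 - C (d 0 + d 1 + d 2) * X ^ 2 + 4 * C (d 0 * d 1 * d 2) := by
  have hcharmatrix : (partSign 3 * diagonal d).charmatrix =
      !![X - C (d 0), C (d 1), C (d 2);
         C (d 0), X - C (d 1), C (d 2);
         C (d 0), C (d 1), X - C (d 2)] := by
    ext i j
    fin_cases i <;> fin_cases j <;> simp [partSign]
  rw [Matrix.charpoly, hcharmatrix, det_fin_three]
  simp only [of_apply, cons_val', cons_val_zero, cons_val_fin_one, cons_val_one, cons_val,
    map_add, map_mul]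
  ring

lemma charpoly_seidel_tripartite_eq {a b c x y z : ℕ} (hsum : a + b + c = x + y + z)
    (hprod : a * b * c = x * y * z) :
    (seidel (completeMultipartite ![a, b, c])).charpoly =
      (seidel (completeMultipartite ![x, y, z])).charpoly := by
  have hsumℝ : (a + b + c : ℝ) = x + y + z := by exact_mod_cast hsum
  have hprodℝ : (a * b * c : ℝ) = x * y * z := by exact_mod_cast hprod
  apply charpoly_seidel_eq_of_charpoly_eq
  · simpa [Fin.sum_univ_three] using hsum
  · simp [charpoly_partSign_mul_diagonal_fin_three, hsumℝ, hprodℝ]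

end completeMultipartite

/-- For every positive integer `k`, the triples `(k(2k-1), k(2k-1), 1)` and
`((2k-1)², k, k)` have the same sum and product, hence `K_{k(2k-1),k(2k-1),1}` and
`K_{(2k-1)²,k,k}` are Seidel cospectral; and for `k > 1` the triples differ. -/
theorem tripartite_prr_ppr_cospectral (k : ℕ) (hk : 1 ≤ k) :
    (k * (2 * k - 1) + k * (2 * k - 1) + 1 = (2 * k - 1) ^ 2 + k + k) ∧
    ((k * (2 * k - 1)) * (k * (2 * k - 1)) * 1 = (2 * k - 1) ^ 2 * k * k) ∧
    (seidel (completeMultipartite ![k * (2 * k - 1), k * (2 * k - 1), 1])).charpoly =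
      (seidel (completeMultipartite ![(2 * k - 1) ^ 2, k, k])).charpoly ∧
    (1 < k → (k * (2 * k - 1), k * (2 * k - 1), 1) ≠ ((2 * k - 1) ^ 2, k, k)) := by
  obtain ⟨j, rfl⟩ : ∃ j, k = j + 1 := ⟨k - 1, by omega⟩
  rw [show 2 * (j + 1) - 1 = 2 * j + 1 by omega]
  have hsum : (j + 1) * (2 * j + 1) + (j + 1) * (2 * j + 1) + 1
      = (2 * j + 1) ^ 2 + (j + 1) + (j + 1) := by ring
  have hprod : (j + 1) * (2 * j + 1) * ((j + 1) * (2 * j + 1)) * 1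
      = (2 * j + 1) ^ 2 * (j + 1) * (j + 1) := by ring
  refine ⟨hsum, hprod, completeMultipartite.charpoly_seidel_tripartite_eq hsum hprod,
    fun hj htriple => ?_⟩
  have hmiddle : (j + 1) * (2 * j + 1) = j + 1 := congrArg (·.2.1) htriple
  rw [Nat.mul_eq_left j.succ_ne_zero] at hmiddle
  omega
end

section
/- Let p > q ≥ r ≥ 1 be integers with p prime. If x ≥ y ≥ z ≥ 1 are integers with x + y + z = p + q + r and xyz = pqr, then the multiset {x,y,z} equals {p,q,r}. Consequently K_{p,q,r} with max{p,q,r} prime is S-determined. -/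
lemma quad_aux (a b c d : ℤ) (h1 : a + b = c + d) (h2 : a * b = c * d)
    (h3 : b ≤ a) (h4 : d ≤ c) : a = c ∧ b = d := by
  have h : (a - c) * (a - d) = 0 := by linear_combination a * h1 - h2
  rcases mul_eq_zero.1 h with h' | h' <;> constructor <;> linarith

/-- If `p > q ≥ r ≥ 1` with `p` prime, then the only positive integer triple
`x ≥ y ≥ z` with `x + y + z = p + q + r` and `xyz = pqr` is `{p, q, r}`;
consequently `K_{p,q,r}` with `max{p,q,r}` prime is S-determined. -/
theorem tripartite_max_prime_determined (p q r x y z : ℕ)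
    (hp : p.Prime) (hpq : p > q) (hqr : q ≥ r) (hr : 1 ≤ r)
    (hxy : x ≥ y) (hyz : y ≥ z) (hz : 1 ≤ z)
    (hsum : x + y + z = p + q + r) (hprod : x * y * z = p * q * r) :
    ({x, y, z} : Multiset ℕ) = {p, q, r} := by
  have hp2 := hp.two_le
  have hpdvd : p ∣ x * y * z := hprod ▸ ⟨q * r, by ring⟩
  rcases (Nat.Prime.dvd_mul hp).1 hpdvd with hd | hdz
  · rcases (Nat.Prime.dvd_mul hp).1 hd with hdx | hdy
    · -- p ∣ x
      have hx' : p ≤ x := Nat.le_of_dvd (by omega) hdx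
      obtain ⟨k, hk⟩ := hdx
      have hk1 : 1 ≤ k := by
        rcases Nat.eq_zero_or_pos k with h | h
        · subst h; simp at hk; omega
        · exact h
      have hk2 : k ≤ 2 := by
        by_contra h
        push_neg at h
        have : p * 3 ≤ p * k := Nat.mul_le_mul_left p h
        have : 3 * p ≤ x := by omega
        omega
      interval_cases k
      · -- x = p
        have hx : x = p := by omega
        have hyz' : y * z = q * r := by
          apply Nat.eq_of_mul_eq_mul_left (show 0 < p by omega)
          calc p * (y * z) = x * y * z := by rw [hx]; ring
            _ = p * q * r := hprod
            _ = p * (q * r) := by ring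
        have hsum' : y + z = q + r := by omega
        have := quad_aux (y : ℤ) z q r (by exact_mod_cast hsum')
          (by exact_mod_cast hyz') (by exact_mod_cast hyz) (by exact_mod_cast hqr)
        have hy : y = q := by exact_mod_cast this.1
        have hzz : z = r := by exact_mod_cast this.2
        rw [hx, hy, hzz]
      · -- x = 2p : contradiction
        exfalso
        have hx : x = 2 * p := by omega
        have hyz' : 2 * (y * z) = q * r := by
          apply Nat.eq_of_mul_eq_mul_left (show 0 < p by omega)
          calc p * (2 * (y * z)) = x * y * z := by rw [hx]; ring
            _ = p * q * r := hprod
            _ = p * (q * r) := by ring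
        have hsum' : p + (y + z) = q + r := by omega
        have h1 : (p : ℤ) + (y + z) = q + r := by exact_mod_cast hsum'
        have h2 : 2 * ((y : ℤ) * z) = q * r := by exact_mod_cast hyz'
        have h3 : (q : ℤ) + 1 ≤ p := by exact_mod_cast hpq
        have h4 : (r : ℤ) ≤ q := by exact_mod_cast hqr
        have h5 : (1 : ℤ) ≤ r := by exact_mod_cast hr
        have h6 : (z : ℤ) ≤ y := by exact_mod_cast hyz
        have h7 : (1 : ℤ) ≤ z := by exact_mod_cast hz
        have hle : (y : ℤ) + z ≤ r - 1 := by linarith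
        nlinarith [sq_nonneg ((y : ℤ) - z), mul_le_mul hle hle (by linarith) (by linarith),
          mul_le_mul h4 (le_refl (r : ℤ)) (by linarith) (by linarith)]
    · -- p ∣ y : contradiction
      exfalso
      have hy' : p ≤ y := Nat.le_of_dvd (by omega) hdy
      obtain ⟨k, hk⟩ := hdy
      have hk1 : k = 1 := by
        rcases Nat.lt_or_ge k 2 with h | h
        · have : 1 ≤ k := by
            rcases Nat.eq_zero_or_pos k with h' | h'
            · subst h'; simp at hk; omega
            · exact h'
          omega
        · exfalso
          have : p * 2 ≤ p * k := Nat.mul_le_mul_left p h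
          omega
      have hy : y = p := by rw [hk1, mul_one] at hk; exact hk
      have hxz' : x * z = q * r := by
        apply Nat.eq_of_mul_eq_mul_left (show 0 < p by omega)
        calc p * (x * z) = x * y * z := by rw [hy]; ring
          _ = p * q * r := hprod
          _ = p * (q * r) := by ring
      have hsum' : x + z = q + r := by omega
      have := quad_aux (x : ℤ) z q r (by exact_mod_cast hsum')
        (by exact_mod_cast hxz') (by exact_mod_cast (le_trans hyz hxy)) (by exact_mod_cast hqr)
      have hx : x = q := by exact_mod_cast this.1
      omega
  · -- p ∣ z : contradiction
    exfalso
    have hz' : p ≤ z := Nat.le_of_dvd (by omega) hdz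
    omega
end

section
/- If p, q, r are all powers of the same prime a, and x, y, z are positive integers with x + y + z = p + q + r and xyz = pqr, then the multiset {x,y,z} equals {p,q,r}. -/
/-!
Write the six numbers as `a ^ e`. Equal products means equal exponent sums. If every exponent
on one side is positive, so is every exponent on the other side, and dividing all six numbers by
`a` lowers the exponent sum. Otherwise both sides contain a `1`: cancelling it leaves two pairs
with the same sum and the same product, which coincide. The one-sided case is impossible: with a
single `1` on the right, `a` would divide `1`; with two, the right-hand sum `2 + a ^ (u + v + w)`
would exceed the product `a ^ u * a ^ v * a ^ w`, which bounds the left-hand sum.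
-/

lemma Multiset.pair_eq_of_add_eq_of_mul_eq {b c e f : ℕ} (hs : b + c = e + f)
    (hp : b * c = e * f) : ({b, c} : Multiset ℕ) = {e, f} := by
  have hs' : (b : ℤ) + c = e + f := by exact_mod_cast hs
  have hp' : (b : ℤ) * c = e * f := by exact_mod_cast hp
  have h : ((b : ℤ) - e) * ((b : ℤ) - f) = 0 := by linear_combination (b : ℤ) * hs' - hp'
  rcases mul_eq_zero.mp h with h | h
  · obtain rfl : b = e := by omega
    obtain rfl : c = f := by omega
    rfl
  · obtain rfl : b = f := by omega
    obtain rfl : c = e := by omega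
    exact Multiset.pair_comm b c

lemma add_add_le_mul_mul {x y z : ℕ} (hx : 2 ≤ x) (hy : 2 ≤ y) (hz : 2 ≤ z) :
    x + y + z ≤ x * y * z :=
  calc x + y + z ≤ x * y + z := by gcongr; exact Nat.add_le_mul hx hy
    _ ≤ x * y * z := Nat.add_le_mul (by nlinarith) hz

section PowTriple

variable {a : ℕ}

lemma exists_pow_triple_eq_one_cons {i j l : ℕ} (h : i = 0 ∨ j = 0 ∨ l = 0) :
    ∃ m n, ({a ^ i, a ^ j, a ^ l} : Multiset ℕ) = {1, a ^ m, a ^ n} ∧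
      a ^ i + a ^ j + a ^ l = 1 + a ^ m + a ^ n ∧ i + j + l = m + n := by
  rcases h with rfl | rfl | rfl
  · exact ⟨j, l, by rw [pow_zero], by rw [pow_zero], by rw [zero_add]⟩
  · exact ⟨i, l, by rw [pow_zero]; exact Multiset.cons_swap _ _ _, by rw [pow_zero]; ring,
      by rw [add_zero]⟩
  · refine ⟨i, j, ?_, by rw [pow_zero]; ring, by rw [add_zero]⟩
    rw [pow_zero, Multiset.insert_eq_cons, Multiset.pair_comm]
    exact Multiset.cons_swap _ _ _

lemma exponent_eq_zero_of_add_pow_eq_one_add (ha : 2 ≤ a) {u v w j l : ℕ}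
    (hs : a ^ u + a ^ v + a ^ w = 1 + a ^ j + a ^ l) (he : u + v + w = j + l) :
    u = 0 ∨ v = 0 ∨ w = 0 := by
  by_contra! hpos
  obtain ⟨hu, hv, hw⟩ := hpos
  have ha_dvd : a ∣ a ^ u + a ^ v + a ^ w :=
    dvd_add (dvd_add (dvd_pow_self a hu) (dvd_pow_self a hv)) (dvd_pow_self a hw)
  have two_le_pow {k : ℕ} (hk : k ≠ 0) : 2 ≤ a ^ k :=
    ha.trans (Nat.le_self_pow hk a)
  have sum_le : a ^ u + a ^ v + a ^ w ≤ a ^ (u + v + w) := by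
    rw [pow_add, pow_add]
    exact add_add_le_mul_mul (two_le_pow hu) (two_le_pow hv) (two_le_pow hw)
  rcases Nat.eq_zero_or_pos j with rfl | hj
  · rw [pow_zero] at hs
    rw [he, zero_add] at sum_le
    omega
  rcases Nat.eq_zero_or_pos l with rfl | hl
  · rw [pow_zero] at hs
    rw [he, add_zero] at sum_le
    omega
  · rw [hs, add_assoc] at ha_dvd
    have : a ∣ 1 := (Nat.dvd_add_left (dvd_add (dvd_pow_self a hj.ne')
      (dvd_pow_self a hl.ne'))).mp ha_dvd
    rw [Nat.dvd_one.mp this] at ha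
    omega

lemma exponent_eq_zero_of_add_pow_eq (ha : 2 ≤ a) {u v w i j l : ℕ}
    (hs : a ^ u + a ^ v + a ^ w = a ^ i + a ^ j + a ^ l) (he : u + v + w = i + j + l)
    (h0 : i = 0 ∨ j = 0 ∨ l = 0) : u = 0 ∨ v = 0 ∨ w = 0 := by
  obtain ⟨m, n, -, hs', he'⟩ := exists_pow_triple_eq_one_cons (a := a) h0
  exact exponent_eq_zero_of_add_pow_eq_one_add ha (hs.trans hs') (he.trans he')

lemma pow_triple_eq_of_exponent_eq_zero (ha : 2 ≤ a) {u v w i j l : ℕ}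
    (hs : a ^ u + a ^ v + a ^ w = a ^ i + a ^ j + a ^ l) (he : u + v + w = i + j + l)
    (h0 : u = 0 ∨ v = 0 ∨ w = 0) :
    ({a ^ u, a ^ v, a ^ w} : Multiset ℕ) = {a ^ i, a ^ j, a ^ l} := by
  obtain ⟨m, n, hms, hs₁, he₁⟩ := exists_pow_triple_eq_one_cons (a := a) h0
  obtain ⟨m', n', hms', hs₂, he₂⟩ :=
    exists_pow_triple_eq_one_cons (a := a) (exponent_eq_zero_of_add_pow_eq ha hs.symm he.symm h0)
  have hpair : ({a ^ m, a ^ n} : Multiset ℕ) = {a ^ m', a ^ n'} :=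
    Multiset.pair_eq_of_add_eq_of_mul_eq (by omega)
      (by rw [← pow_add, ← pow_add]; congr 1; omega)
  rw [hms, hms', Multiset.insert_eq_cons 1, Multiset.insert_eq_cons 1, hpair]

theorem pow_triple_eq_of_add_pow_eq (ha : 2 ≤ a) (n : ℕ) :
    ∀ {u v w i j l : ℕ}, u + v + w = n → i + j + l = n →
      a ^ u + a ^ v + a ^ w = a ^ i + a ^ j + a ^ l →
      ({a ^ u, a ^ v, a ^ w} : Multiset ℕ) = {a ^ i, a ^ j, a ^ l} := by
  induction n using Nat.strong_induction_on with
  | _ n ih =>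
    intro u v w i j l hn hn' hs
    by_cases h0 : u = 0 ∨ v = 0 ∨ w = 0
    · exact pow_triple_eq_of_exponent_eq_zero ha hs (hn.trans hn'.symm) h0
    have h0' : ¬(i = 0 ∨ j = 0 ∨ l = 0) := fun h =>
      h0 (exponent_eq_zero_of_add_pow_eq ha hs (hn.trans hn'.symm) h)
    push Not at h0 h0'
    obtain ⟨u, rfl⟩ := Nat.exists_eq_succ_of_ne_zero h0.1
    obtain ⟨v, rfl⟩ := Nat.exists_eq_succ_of_ne_zero h0.2.1
    obtain ⟨w, rfl⟩ := Nat.exists_eq_succ_of_ne_zero h0.2.2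
    obtain ⟨i, rfl⟩ := Nat.exists_eq_succ_of_ne_zero h0'.1
    obtain ⟨j, rfl⟩ := Nat.exists_eq_succ_of_ne_zero h0'.2.1
    obtain ⟨l, rfl⟩ := Nat.exists_eq_succ_of_ne_zero h0'.2.2
    simp only [pow_succ', ← mul_add] at hs
    have hms := ih (u + v + w) (by omega) rfl (by omega)
      (Nat.eq_of_mul_eq_mul_left (by omega) hs)
    simpa [Multiset.insert_eq_cons, pow_succ'] using congrArg (Multiset.map (a * ·)) hms

end PowTriple

theorem tripartite_prime_powers_determined_general (a p q r x y z : ℕ)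
    (ha : a.Prime)
    (hp : ∃ i : ℕ, p = a ^ i) (hq : ∃ j : ℕ, q = a ^ j) (hr : ∃ l : ℕ, r = a ^ l)
    (hsum : x + y + z = p + q + r) (hprod : x * y * z = p * q * r) :
    ({x, y, z} : Multiset ℕ) = {p, q, r} := by
  obtain ⟨i, rfl⟩ := hp
  obtain ⟨j, rfl⟩ := hq
  obtain ⟨l, rfl⟩ := hr
  have hprod' : x * y * z = a ^ (i + j + l) := by rw [hprod, pow_add, pow_add]
  have hx : x ∣ a ^ (i + j + l) := ⟨y * z, by rw [← hprod']; ring⟩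
  have hy : y ∣ a ^ (i + j + l) := ⟨x * z, by rw [← hprod']; ring⟩
  have hz : z ∣ a ^ (i + j + l) := ⟨x * y, by rw [← hprod']; ring⟩
  obtain ⟨u, -, rfl⟩ := (Nat.dvd_prime_pow ha).mp hx
  obtain ⟨v, -, rfl⟩ := (Nat.dvd_prime_pow ha).mp hy
  obtain ⟨w, -, rfl⟩ := (Nat.dvd_prime_pow ha).mp hz
  have hexp : u + v + w = i + j + l :=
    Nat.pow_right_injective ha.two_le (by simpa only [← pow_add] using hprod')
  exact pow_triple_eq_of_add_pow_eq ha.two_le _ hexp rfl hsum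

/-- If `p, q, r` are all powers of the same prime `a`, and `x, y, z` are positive
integers with `x + y + z = p + q + r` and `xyz = pqr`, then the multiset `{x, y, z}`
equals `{p, q, r}`. -/
theorem tripartite_prime_powers_determined (a p q r x y z : ℕ)
    (ha : a.Prime)
    (hp : ∃ i : ℕ, p = a ^ i) (hq : ∃ j : ℕ, q = a ^ j) (hr : ∃ l : ℕ, r = a ^ l)
    (hx : 1 ≤ x) (hy : 1 ≤ y) (hz : 1 ≤ z)
    (hsum : x + y + z = p + q + r) (hprod : x * y * z = p * q * r) :
    ({x, y, z} : Multiset ℕ) = {p, q, r} :=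
  tripartite_prime_powers_determined_general a p q r x y z ha hp hq hr hsum hprod
end

section
/- Let p > r ≥ 1 and suppose x ≥ y ≥ z ≥ 1 are positive integers with x + y + z = 2p + r, xyz = p²r, and x, y, z ∉ {p, r}. Then x > p > y ≥ z > r and x + y < 2p. -/
private lemma aux_q2 (p s : ℤ) (hp : 0 < p) (hs : 0 < s) :
    s^2*(p-2) < 4*(p*s*(s+1)) := by
  nlinarith [mul_pos hp hs, mul_pos hp (mul_pos hs hs), mul_pos hs hs]

private lemma aux_q3 (p s c d : ℤ) (hps : 0 < p*s) (h : c ≤ d) :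
    4*(p*s*c) ≤ 4*(p*s*d) := by nlinarith [mul_le_mul_of_nonneg_left h hps.le]

private lemma aux_e1 (a b z : ℤ) (hz : 0 ≤ z) : 4*(a*b*z) ≤ (a+b)^2 * z := by
  nlinarith [mul_nonneg (sq_nonneg (a-b)) hz]

/-- Let `p > r ≥ 1` and suppose `x ≥ y ≥ z ≥ 1` satisfy `x + y + z = 2p + r`,
`xyz = p²r`, and none of `x, y, z` belongs to `{p, r}`. Then
`x > p > y ≥ z > r` and `x + y < 2p`. -/
theorem cospectral_with_ppr_bounds (p r x y z : ℕ)
    (hpr : p > r) (hr : 1 ≤ r)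
    (hxy : x ≥ y) (hyz : y ≥ z) (hz : 1 ≤ z)
    (hsum : x + y + z = 2 * p + r) (hprod : x * y * z = p ^ 2 * r)
    (hx : x ≠ p ∧ x ≠ r) (hy : y ≠ p ∧ y ≠ r) (hz' : z ≠ p ∧ z ≠ r) :
    x > p ∧ p > y ∧ y ≥ z ∧ z > r ∧ x + y < 2 * p := by
  obtain ⟨hxp, hxr⟩ := hx
  obtain ⟨hyp, hyr⟩ := hy
  obtain ⟨hzp, hzr⟩ := hz'
  have hsumZ : (x:ℤ) + y + z = 2*p + r := by exact_mod_cast hsum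
  have hprodZ : (x:ℤ) * y * z = (p:ℤ)^2 * r := by exact_mod_cast hprod
  have hzlp : z < p := by omega
  -- Step 1 : x > p
  have hxgt : x > p := by
    by_contra h
    push_neg at h
    have hxlt : x < p := lt_of_le_of_ne h hxp
    have hrz : r < z := by
      by_contra hzr2
      push_neg at hzr2
      have hzr3 : z < r := lt_of_le_of_ne hzr2 hzr
      have h1 : (x:ℤ) ≤ (p:ℤ) - 1 := by exact_mod_cast by omega
      have h2 : (y:ℤ) ≤ (p:ℤ) - 1 := by exact_mod_cast by omega
      have h3 : (z:ℤ) ≤ (r:ℤ) - 1 := by exact_mod_cast by omega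
      have h4 : (1:ℤ) ≤ z := by exact_mod_cast hz
      have h5 : (1:ℤ) ≤ y := by
        have : 1 ≤ y := le_trans hz hyz
        exact_mod_cast this
      have h6 : (1:ℤ) ≤ x := le_trans h5 (by exact_mod_cast hxy)
      have h7 : (1:ℤ) ≤ r := by exact_mod_cast hr
      nlinarith [hprodZ, mul_pos (mul_pos (show (0:ℤ) < x by linarith) (show (0:ℤ) < y by linarith)) (show (0:ℤ) < z by linarith)]
    -- now r < z ≤ y ≤ x < p
    have hA : (0:ℤ) < ((p:ℤ)-x)*((p:ℤ)-y)*((p:ℤ)-z) := by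
      have f1 : (0:ℤ) < (p:ℤ)-x := by have := hxlt; omega
      have f2 : (0:ℤ) < (p:ℤ)-y := by
        have : y < p := lt_of_le_of_lt hxy hxlt
        omega
      have f3 : (0:ℤ) < (p:ℤ)-z := by
        have := hzlp; omega
      exact mul_pos (mul_pos f1 f2) f3
    have hB : (0:ℤ) < ((x:ℤ)-r)*((y:ℤ)-r)*((z:ℤ)-r) := by
      have f3 : (0:ℤ) < (z:ℤ)-r := by omega
      have f2 : (0:ℤ) < (y:ℤ)-r := by
        have : r < y := lt_of_lt_of_le hrz hyz
        omega
      have f1 : (0:ℤ) < (x:ℤ)-r := by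
        have : r < x := lt_of_lt_of_le hrz (le_trans hyz hxy)
        omega
      exact mul_pos (mul_pos f1 f2) f3
    have key : (r:ℤ)*(((p:ℤ)-x)*((p:ℤ)-y)*((p:ℤ)-z)) + (p:ℤ)*(((x:ℤ)-r)*((y:ℤ)-r)*((z:ℤ)-r)) = 0 := by
      linear_combination ((p:ℤ)-r)*hprodZ - ((p:ℤ)-r)*(p:ℤ)*(r:ℤ)*hsumZ
    have hrpos : (0:ℤ) < r := by exact_mod_cast hr
    have hppos : (0:ℤ) < p := by have := hpr; omega
    nlinarith [mul_pos hrpos hA, mul_pos hppos hB]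
  -- Step 2 : y < p
  have hylt : y < p := by
    by_contra h
    push_neg at h
    have hygt : p < y := lt_of_le_of_ne h (Ne.symm hyp)
    have haZ : (1:ℤ) ≤ (x:ℤ) - p := by
      have : p < x := hxgt; omega
    have hbZ : (1:ℤ) ≤ (y:ℤ) - p := by omega
    have hz1 : (1:ℤ) ≤ (z:ℤ) := by exact_mod_cast hz
    have hpZ : (r:ℤ) + 1 ≤ p := by
      have := hpr; omega
    have key3 : (p:ℤ)*((x:ℤ)+y-2*p)*((p:ℤ)-r+((x:ℤ)+y-2*p)) = ((x:ℤ)-p)*((y:ℤ)-p)*z := by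
      linear_combination (-(1:ℤ))*hprodZ + ((p:ℤ)*((x:ℤ)+y) - (p:ℤ)^2)*hsumZ
    set a : ℤ := (x:ℤ) - p with ha
    set b : ℤ := (y:ℤ) - p with hb
    have hzv : (z:ℤ) = r - (a + b) := by rw [ha, hb]; linarith [hsumZ]
    have hs2 : 2 ≤ a + b := by linarith
    have hsr : a + b ≤ (r:ℤ) - 1 := by
      have : (1:ℤ) ≤ r - (a+b) := hzv ▸ hz1
      linarith
    have e1 : 4*(a*b*(z:ℤ)) ≤ (a+b)^2 * z := aux_e1 _ _ _ (by linarith)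
    have e2 : (a+b)^2 * (z:ℤ) ≤ (a+b)^2 * ((r:ℤ)-1) := by
      have hzle : (z:ℤ) ≤ (r:ℤ) - 1 := by rw [hzv]; linarith
      exact mul_le_mul_of_nonneg_left hzle (sq_nonneg _)
    have hppos' : (0:ℤ) < p := by have := hpr; omega
    have hsp : (0:ℤ) < a + b := by linarith
    have e3 : (a+b)^2*((r:ℤ)-1) < 4*((p:ℤ)*(a+b)*((p:ℤ)-r+(a+b))) := by
      have hq1 : (a+b)^2*((r:ℤ)-1) ≤ (a+b)^2*((p:ℤ)-2) :=
        mul_le_mul_of_nonneg_left (by linarith) (sq_nonneg _)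
      have hq2 : (a+b)^2*((p:ℤ)-2) < 4*((p:ℤ)*(a+b)*((a+b)+1)) := aux_q2 _ _ hppos' hsp
      have hq3 : 4*((p:ℤ)*(a+b)*((a+b)+1)) ≤ 4*((p:ℤ)*(a+b)*((p:ℤ)-r+(a+b))) :=
        aux_q3 _ _ _ _ (mul_pos hppos' hsp) (by linarith)
      linarith
    have key3' : (p:ℤ)*(a+b)*((p:ℤ)-r+(a+b)) = a*b*z := by
      rw [ha, hb]; linear_combination key3
    linarith [e1, e2, e3, key3']
  -- Step 3 : x + y < 2p and z > r
  have haZ : (1:ℤ) ≤ (x:ℤ) - p := by have := hxgt; omega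
  have hbZ : (1:ℤ) ≤ (p:ℤ) - y := by omega
  have hz1 : (1:ℤ) ≤ (z:ℤ) := by exact_mod_cast hz
  have hzpZ : (z:ℤ) - p ≤ -1 := by have := hzlp; omega
  have hppos : (0:ℤ) < p := by have := hpr; omega
  have key4 : (((x:ℤ)-p) - ((p:ℤ)-y))*(p:ℤ)*((z:ℤ)-p) = ((x:ℤ)-p)*((p:ℤ)-y)*z := by
    linear_combination hprodZ + ((((x:ℤ)-p)-((p:ℤ)-y))*(p:ℤ) - ((x:ℤ)-p)*((p:ℤ)-y) - (x:ℤ)*(y:ℤ))*hsumZ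
  have hRHS : (0:ℤ) < ((x:ℤ)-p)*((p:ℤ)-y)*z :=
    mul_pos (mul_pos (by linarith) (by linarith)) (by linarith)
  have hsum2 : (x:ℤ) + y < 2*p := by
    by_contra hcon
    push_neg at hcon
    have hd : (0:ℤ) ≤ ((x:ℤ)-p) - ((p:ℤ)-y) := by linarith
    nlinarith [key4, hRHS, mul_nonneg (mul_nonneg hd hppos.le) (show (0:ℤ) ≤ (p:ℤ) - z by linarith)]
  have hxy2 : x + y < 2*p := by exact_mod_cast hsum2
  have hzgt : z > r := by omega
  exact ⟨hxgt, hylt, hyz, hzgt, hxy2⟩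
end

section
/- Let a and b be distinct primes with (a,b) ≠ (2,3). Then the only positive integer triple x ≥ y ≥ z with x + y + z = 2ab + a and xyz = a³b² is {x,y,z} = {ab, ab, a}; i.e., K_{ab,ab,a} is S-determined. Moreover for (a,b) = (2,3), the triple (8,3,3) gives a second solution, so K_{6,6,2} and K_{8,3,3} are Seidel cospectral. -/
open Polynomial Matrix

/-!
If two of `x, y, z` are prime to `a`, the third absorbs `a³` and all remaining factors are
powers of `b`; comparing sizes leaves only `a³ + 2b = a(2b + 1)`, i.e. `a(a + 1) = 2b`, which
forces `(a, b) = (2, 3)`. Otherwise `a` divides all three (it divides their sum), and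
`x/a, y/a, z/a` are powers of `b` with sum `2b + 1` and product `b²`, hence `b, b, 1`.

For the Seidel matrix `S` of `K_{p_1, …, p_k}` on `n` vertices, `S + 1 = E C Eᵀ` where `E` is the
vertex–part incidence matrix and `C = 2 - J`. As `Eᵀ E = diag p`, the characteristic polynomial
of `S` is, up to the factor `(X + 1) ^ (n - k)`, that of the `k × k` matrix `C diag p` shifted
by one. For `k = 3` the latter is `X³ - (p + q + r) X² + 4pqr`, so the Seidel spectrum of
`K_{p,q,r}` only depends on `p + q + r` and `pqr`.
-/

theorem exists_eq_pow_of_mul_mul_eq_prime_pow {b n x y z : ℕ} (hb : b.Prime)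
    (h : x * y * z = b ^ n) :
    ∃ i j l, i + j + l = n ∧ x = b ^ i ∧ y = b ^ j ∧ z = b ^ l := by
  obtain ⟨i, -, rfl⟩ := (Nat.dvd_prime_pow hb).1 (show x ∣ b ^ n from ⟨y * z, by rw [← h]; ring⟩)
  obtain ⟨j, -, rfl⟩ :=
    (Nat.dvd_prime_pow hb).1 (show y ∣ b ^ n from ⟨b ^ i * z, by rw [← h]; ring⟩)
  obtain ⟨l, -, rfl⟩ :=
    (Nat.dvd_prime_pow hb).1 (show z ∣ b ^ n from ⟨b ^ i * b ^ j, by rw [← h]; ring⟩)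
  refine ⟨i, j, l, Nat.pow_right_injective hb.two_le ?_, rfl, rfl, rfl⟩
  simpa only [pow_add] using h

theorem eq_prime_of_add_add_eq_of_mul_mul_eq_sq {b x y z : ℕ} (hb : b.Prime) (hxy : y ≤ x)
    (hyz : z ≤ y) (hsum : x + y + z = 2 * b + 1) (hprod : x * y * z = b ^ 2) :
    x = b ∧ y = b ∧ z = 1 := by
  obtain ⟨i, j, l, hijl, rfl, rfl, rfl⟩ := exists_eq_pow_of_mul_mul_eq_prime_pow hb hprod
  rw [Nat.pow_le_pow_iff_right hb.one_lt] at hxy hyz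
  obtain ⟨rfl, rfl, rfl⟩ | ⟨rfl, rfl, rfl⟩ : i = 2 ∧ j = 0 ∧ l = 0 ∨ i = 1 ∧ j = 1 ∧ l = 0 := by
    omega
  · nlinarith [hb.two_le]
  · simp

theorem eq_two_and_eq_three_of_cube_add {a b : ℕ} (ha : a.Prime) (hb : b.Prime) (hab : a ≠ b)
    (h : a ^ 3 + 2 * b = 2 * a * b + a) : a = 2 ∧ b = 3 := by
  have hdvd : a ∣ 2 * b :=
    (Nat.dvd_add_right (dvd_pow_self a three_ne_zero)).1 (h ▸ ⟨2 * b + 1, by ring⟩)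
  rcases ha.dvd_mul.1 hdvd with h2 | hab'
  · obtain rfl := (Nat.prime_dvd_prime_iff_eq ha Nat.prime_two).1 h2
    omega
  · exact absurd ((Nat.prime_dvd_prime_iff_eq ha hb).1 hab') hab

theorem dvd_or_dvd_of_add_add_eq_of_mul_mul_eq {a b x y z : ℕ} (ha : a.Prime) (hb : b.Prime)
    (hab : a ≠ b) (h23 : (a, b) ≠ (2, 3)) (hsum : x + y + z = 2 * a * b + a)
    (hprod : x * y * z = a ^ 3 * b ^ 2) : a ∣ y ∨ a ∣ z := by
  by_contra! hyz
  have hcop : Nat.Coprime (a ^ 3) (y * z) :=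
    (Nat.Coprime.mul_right (ha.coprime_iff_not_dvd.2 hyz.1)
      (ha.coprime_iff_not_dvd.2 hyz.2)).pow_left 3
  obtain ⟨u, rfl⟩ : a ^ 3 ∣ x := hcop.dvd_of_dvd_mul_right ⟨b ^ 2, by rw [← hprod]; ring⟩
  have huyz : u * y * z = b ^ 2 :=
    Nat.eq_of_mul_eq_mul_left (pow_pos ha.pos 3) (by rw [← hprod]; ring)
  obtain ⟨m, j, l, hmjl, rfl, rfl, rfl⟩ := exists_eq_pow_of_mul_mul_eq_prime_pow hb huyz
  have ha2 := ha.two_le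
  have hb2 := hb.two_le
  rcases Nat.eq_zero_or_pos m with rfl | hm
  · have hcube : 2 * (a : ℤ) ^ 2 ≤ a ^ 3 := by nlinarith [sq_nonneg (a : ℤ)]
    rcases (show j = 0 ∧ l = 2 ∨ j = 1 ∧ l = 1 ∨ j = 2 ∧ l = 0 by omega) with
      ⟨rfl, rfl⟩ | ⟨rfl, rfl⟩ | ⟨rfl, rfl⟩
    · have hZ : (a : ℤ) ^ 3 + 1 + b ^ 2 = 2 * a * b + a := by exact_mod_cast by simpa using hsum
      nlinarith [sq_nonneg ((a : ℤ) - b)]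
    · obtain ⟨rfl, rfl⟩ := eq_two_and_eq_three_of_cube_add ha hb hab
        (by simp only [pow_zero, pow_one, mul_one] at hsum; linarith)
      exact h23 rfl
    · have hZ : (a : ℤ) ^ 3 + b ^ 2 + 1 = 2 * a * b + a := by exact_mod_cast by simpa using hsum
      nlinarith [sq_nonneg ((a : ℤ) - b)]
  · have h1 : a ^ 3 * b ≤ a ^ 3 * b ^ m := Nat.mul_le_mul_left _ (Nat.le_self_pow hm.ne' b)
    have h2 : 4 * (a * b) ≤ a ^ 2 * (a * b) := Nat.mul_le_mul_right _ (by nlinarith)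
    have h3 : a * 2 ≤ a * b := Nat.mul_le_mul_left a hb2
    linarith [Nat.zero_le (b ^ j), Nat.zero_le (b ^ l)]

theorem eq_ab_ab_a_of_add_add_eq_of_mul_mul_eq {a b x y z : ℕ} (ha : a.Prime) (hb : b.Prime)
    (hab : a ≠ b) (h23 : (a, b) ≠ (2, 3)) (hxy : y ≤ x) (hyz : z ≤ y)
    (hsum : x + y + z = 2 * a * b + a) (hprod : x * y * z = a ^ 3 * b ^ 2) :
    (x, y, z) = (a * b, a * b, a) := by
  have hdvd : a ∣ x + y + z := hsum ▸ ⟨2 * b + 1, by ring⟩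
  have hdvd_yz := dvd_or_dvd_of_add_add_eq_of_mul_mul_eq ha hb hab h23 hsum hprod
  have hdvd_xz := dvd_or_dvd_of_add_add_eq_of_mul_mul_eq (x := y) (y := x) (z := z) ha hb hab h23
    (by rw [← hsum]; ring) (by rw [← hprod]; ring)
  have hdvd_xy := dvd_or_dvd_of_add_add_eq_of_mul_mul_eq (x := z) (y := x) (z := y) ha hb hab h23
    (by rw [← hsum]; ring) (by rw [← hprod]; ring)
  obtain ⟨⟨X, rfl⟩, ⟨Y, rfl⟩, ⟨Z, rfl⟩⟩ : a ∣ x ∧ a ∣ y ∧ a ∣ z := by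
    grind [Nat.dvd_add_right, Nat.dvd_add_left]
  obtain ⟨rfl, rfl, rfl⟩ := eq_prime_of_add_add_eq_of_mul_mul_eq_sq hb
    (Nat.le_of_mul_le_mul_left hxy ha.pos) (Nat.le_of_mul_le_mul_left hyz ha.pos)
    (Nat.eq_of_mul_eq_mul_left ha.pos (by rw [mul_add, mul_add, hsum]; ring))
    (Nat.eq_of_mul_eq_mul_left (pow_pos ha.pos 3) (by rw [← hprod]; ring))
  simp

namespace SeidelMultipartite

variable {k : ℕ} (p : Fin k → ℕ)

def partIndicator : Matrix (Σ i, Fin (p i)) (Fin k) ℝ :=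
  of fun u i => if u.1 = i then 1 else 0

def signMatrix (k : ℕ) : Matrix (Fin k) (Fin k) ℝ :=
  of fun i j => if i = j then 1 else -1

def seidelQuotient : Matrix (Fin k) (Fin k) ℝ :=
  of fun i j => if i = j then (p j : ℝ) else -p j

theorem partIndicator_mul_mul_transpose_apply (M : Matrix (Fin k) (Fin k) ℝ)
    (u v : Σ i, Fin (p i)) : (partIndicator p * M * (partIndicator p)ᵀ) u v = M u.1 v.1 := by
  simp [partIndicator, mul_apply]

theorem seidel_completeMultipartite_eq :
    seidel (completeMultipartite p) = partIndicator p * signMatrix k * (partIndicator p)ᵀ - 1 := by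
  ext u v
  rw [Matrix.sub_apply, partIndicator_mul_mul_transpose_apply, one_apply]
  by_cases h : u = v
  · simp [h, seidel, signMatrix]
  · by_cases h' : u.1 = v.1 <;> simp [h, h', seidel, signMatrix, completeMultipartite]

theorem partIndicator_transpose_mul_self :
    (partIndicator p)ᵀ * partIndicator p = diagonal fun i => (p i : ℝ) := by
  ext i j
  by_cases h : i = j
  · subst h
    simp [partIndicator, mul_apply, Fintype.sum_sigma]
  · simp [partIndicator, mul_apply, Fintype.sum_sigma, h, Ne.symm h]

theorem signMatrix_mul_diagonal :
    signMatrix k * diagonal (fun i => (p i : ℝ)) = seidelQuotient p := by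
  ext i j
  simp [signMatrix, seidelQuotient]

theorem charpoly_seidel_completeMultipartite :
    (X + 1) ^ k * (seidel (completeMultipartite p)).charpoly =
      (X + 1) ^ (∑ i, p i) * (seidelQuotient p).charpoly.comp (X + 1) := by
  have h := congrArg (Polynomial.comp · (X + 1 : ℝ[X]))
    (charpoly_mul_comm' (partIndicator p) (signMatrix k * (partIndicator p)ᵀ))
  simp only [mul_comp, pow_comp, X_comp, Fintype.card_fin, Fintype.card_sigma] at h
  rw [seidel_completeMultipartite_eq, ← (scalar _).map_one, charpoly_sub_scalar, map_one,
    Matrix.mul_assoc, h, Matrix.mul_assoc, partIndicator_transpose_mul_self,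
    signMatrix_mul_diagonal]

theorem charpoly_seidel_eq_of_sum_eq {p q : Fin k → ℕ} (hsum : ∑ i, p i = ∑ i, q i)
    (hquot : (seidelQuotient p).charpoly = (seidelQuotient q).charpoly) :
    (seidel (completeMultipartite p)).charpoly = (seidel (completeMultipartite q)).charpoly := by
  refine mul_left_cancel₀ (pow_ne_zero k (X_add_C_ne_zero (1 : ℝ))) ?_
  rw [map_one, charpoly_seidel_completeMultipartite, charpoly_seidel_completeMultipartite, hsum,
    hquot]

theorem charpoly_seidelQuotient_fin_three (p : Fin 3 → ℕ) :
    (seidelQuotient p).charpoly = X ^ 3 - C (∑ i, (p i : ℝ)) * X ^ 2 + C (4 * ∏ i, (p i : ℝ)) := by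
  rw [Matrix.charpoly, Matrix.det_fin_three]
  simp [seidelQuotient, Fin.sum_univ_three, Fin.prod_univ_three, C_ofNat]
  ring

theorem charpoly_seidel_eq_of_sum_eq_of_prod_eq {p q : Fin 3 → ℕ} (hsum : ∑ i, p i = ∑ i, q i)
    (hprod : ∏ i, p i = ∏ i, q i) :
    (seidel (completeMultipartite p)).charpoly = (seidel (completeMultipartite q)).charpoly := by
  refine charpoly_seidel_eq_of_sum_eq hsum ?_
  simp only [charpoly_seidelQuotient_fin_three, ← Nat.cast_sum, ← Nat.cast_prod, hsum, hprod]

end SeidelMultipartite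


/-- For distinct primes `a, b` with `(a,b) ≠ (2,3)`, the only positive integer
triple `x ≥ y ≥ z` with `x + y + z = 2ab + a` and `xyz = a³b²` is `(ab, ab, a)`
(so `K_{ab,ab,a}` is S-determined); while for `(a,b) = (2,3)` the triple `(8,3,3)`
is a second solution, so `K_{6,6,2}` and `K_{8,3,3}` are Seidel cospectral. -/
theorem K_ab_ab_a_determined (a b : ℕ) (ha : a.Prime) (hb : b.Prime) (hab : a ≠ b)
    (h23 : (a, b) ≠ (2, 3)) :
    (∀ x y z : ℕ, x ≥ y → y ≥ z → 1 ≤ z →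
      x + y + z = 2 * a * b + a → x * y * z = a ^ 3 * b ^ 2 →
      (x, y, z) = (a * b, a * b, a)) ∧
    (8 + 3 + 3 = 2 * 2 * 3 + 2 ∧ 8 * 3 * 3 = 2 ^ 3 * 3 ^ 2) ∧
    (seidel (completeMultipartite ![6, 6, 2])).charpoly =
      (seidel (completeMultipartite ![8, 3, 3])).charpoly := by
  refine ⟨fun x y z hxy hyz _ hsum hprod => ?_, by norm_num, ?_⟩
  · exact eq_ab_ab_a_of_add_add_eq_of_mul_mul_eq ha hb hab h23 hxy hyz hsum hprod
  · exact SeidelMultipartite.charpoly_seidel_eq_of_sum_eq_of_prod_eq rfl rfl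
end

section
/- Let p = ab with a > b both prime. If there exists a positive integer triple x ≥ y ≥ z different from (p, p, 1) with x + y + z = 2p + 1 and xyz = p², then a = 2b - 1 and the triple is (a², b, b). Conversely, if a = 2b - 1 then (a², b, b) satisfies a² + 2b = 2ab + 1 and a²b² = (ab)²·1. -/
lemma my_dvd_classify {a b : ℕ} (ha : a.Prime) (hb : b.Prime) {d : ℕ}
    (h : d ∣ a ^ 2 * b ^ 2) : ∃ i j, i ≤ 2 ∧ j ≤ 2 ∧ d = a ^ i * b ^ j := by
  obtain ⟨d1, d2, h1, h2, rfl⟩ := exists_dvd_and_dvd_of_dvd_mul h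
  obtain ⟨i, hi, rfl⟩ := (Nat.dvd_prime_pow ha).1 h1
  obtain ⟨j, hj, rfl⟩ := (Nat.dvd_prime_pow hb).1 h2
  exact ⟨i, j, hi, hj, rfl⟩

lemma my_pow_eq_pow {a b : ℕ} (ha : a.Prime) (hb : b.Prime) (hne : a ≠ b)
    {i j k l : ℕ} (h : a ^ i * b ^ j = a ^ k * b ^ l) : i = k ∧ j = l := by
  have hcop : Nat.Coprime a b := (Nat.coprime_primes ha hb).2 hne
  have hik : i = k := by
    have h1 : a ^ i ∣ a ^ k * b ^ l := ⟨b ^ j, by rw [← h]⟩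
    have h2 : a ^ k ∣ a ^ i * b ^ j := ⟨b ^ l, by rw [h]⟩
    have d1 : a ^ i ∣ a ^ k := (Nat.Coprime.pow _ _ hcop).dvd_of_dvd_mul_right h1
    have d2 : a ^ k ∣ a ^ i := (Nat.Coprime.pow _ _ hcop).dvd_of_dvd_mul_right h2
    have := (Nat.pow_dvd_pow_iff_le_right ha.one_lt).1 d1
    have := (Nat.pow_dvd_pow_iff_le_right ha.one_lt).1 d2
    omega
  subst hik
  have h3 : b ^ j = b ^ l := by
    have hpos : 0 < a ^ i := pow_pos ha.pos _
    exact Nat.eq_of_mul_eq_mul_left hpos h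
  exact ⟨rfl, Nat.pow_right_injective hb.two_le h3⟩

set_option maxHeartbeats 2000000 in

lemma my_good_case {a b : ℕ} (hb2 : 2 ≤ b) (hba : b + 1 ≤ a)
    (hsum : a ^ 2 + b + b = 2 * (a * b) + 1) : a = 2 * b - 1 := by
  have ha3 : 3 ≤ a := by omega
  have key : a + 1 = 2 * b := by
    rcases lt_trichotomy (a + 1) (2 * b) with hlt | heq | hgt
    · exfalso; nlinarith [hsum, ha3, hba, hb2]
    · exact heq
    · exfalso; nlinarith [hsum, ha3, hba, hb2]
  omega

set_option maxHeartbeats 2000000 in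
/-- Let `p = ab` with `a > b` both prime. Any positive integer triple `x ≥ y ≥ z`
different from `(p, p, 1)` with `x + y + z = 2p + 1` and `xyz = p²` forces
`a = 2b - 1` and `(x, y, z) = (a², b, b)`. Conversely, if `a = 2b - 1` then
`(a², b, b)` satisfies `a² + 2b = 2ab + 1` and `a²·b·b = (ab)²·1`. -/
theorem K_pp1_product_of_two_primes (a b : ℕ) (ha : a.Prime) (hb : b.Prime)
    (hab : a > b) :
    (∀ x y z : ℕ, x ≥ y → y ≥ z → 1 ≤ z → (x, y, z) ≠ (a * b, a * b, 1) →
      x + y + z = 2 * (a * b) + 1 → x * y * z = (a * b) ^ 2 →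
      a = 2 * b - 1 ∧ (x, y, z) = (a ^ 2, b, b)) ∧
    (a = 2 * b - 1 → a ^ 2 + 2 * b = 2 * a * b + 1 ∧ a ^ 2 * b * b = (a * b) ^ 2 * 1) := by
  have ha2 := ha.two_le
  have hb2 := hb.two_le
  have hne' : a ≠ b := ne_of_gt hab
  have hba : b + 1 ≤ a := hab
  constructor
  · intro x y z hxy hyz hz hne hsum hprod
    have hp : x * y * z = a ^ 2 * b ^ 2 := by rw [hprod, mul_pow]
    have dx : x ∣ a ^ 2 * b ^ 2 := ⟨y * z, by rw [← hp]; ring⟩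
    have dy : y ∣ a ^ 2 * b ^ 2 := ⟨x * z, by rw [← hp]; ring⟩
    have dz : z ∣ a ^ 2 * b ^ 2 := ⟨x * y, by rw [← hp]; ring⟩
    obtain ⟨i1, j1, hi1, hj1, rfl⟩ := my_dvd_classify ha hb dx
    obtain ⟨i2, j2, hi2, hj2, rfl⟩ := my_dvd_classify ha hb dy
    obtain ⟨i3, j3, hi3, hj3, rfl⟩ := my_dvd_classify ha hb dz
    have hpe : a ^ (i1 + i2 + i3) * b ^ (j1 + j2 + j3) = a ^ 2 * b ^ 2 := by
      rw [← hp]; ring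
    obtain ⟨hi, hj⟩ := my_pow_eq_pow ha hb hne' hpe
    have h6 : (i1 = 2 ∧ i2 = 0 ∧ i3 = 0) ∨ (i1 = 0 ∧ i2 = 2 ∧ i3 = 0) ∨
        (i1 = 0 ∧ i2 = 0 ∧ i3 = 2) ∨ (i1 = 1 ∧ i2 = 1 ∧ i3 = 0) ∨
        (i1 = 1 ∧ i2 = 0 ∧ i3 = 1) ∨ (i1 = 0 ∧ i2 = 1 ∧ i3 = 1) := by omega
    have h7 : (j1 = 2 ∧ j2 = 0 ∧ j3 = 0) ∨ (j1 = 0 ∧ j2 = 2 ∧ j3 = 0) ∨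
        (j1 = 0 ∧ j2 = 0 ∧ j3 = 2) ∨ (j1 = 1 ∧ j2 = 1 ∧ j3 = 0) ∨
        (j1 = 1 ∧ j2 = 0 ∧ j3 = 1) ∨ (j1 = 0 ∧ j2 = 1 ∧ j3 = 1) := by omega
    clear hi hj hi1 hi2 hi3 hj1 hj2 hj3 hp hprod dx dy dz hpe
    rcases h6 with ⟨rfl, rfl, rfl⟩ | ⟨rfl, rfl, rfl⟩ | ⟨rfl, rfl, rfl⟩ |
        ⟨rfl, rfl, rfl⟩ | ⟨rfl, rfl, rfl⟩ | ⟨rfl, rfl, rfl⟩ <;>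
      rcases h7 with ⟨rfl, rfl, rfl⟩ | ⟨rfl, rfl, rfl⟩ | ⟨rfl, rfl, rfl⟩ |
        ⟨rfl, rfl, rfl⟩ | ⟨rfl, rfl, rfl⟩ | ⟨rfl, rfl, rfl⟩ <;>
      simp only [pow_zero, pow_one, one_mul, mul_one] at hxy hyz hz hne hsum ⊢ <;>
      first
      | (exact absurd rfl hne)
      | (exact ⟨my_good_case hb2 hba hsum, trivial⟩)
      | (exfalso; nlinarith [hsum, hxy, hyz, hz, hba, hb2, ha2,
          Nat.mul_le_mul hba hb2, Nat.mul_le_mul ha2 hb2])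
  · intro h
    have h' : a + 1 = 2 * b := by omega
    constructor
    · have h2 : 2 * (a * b) = a * (a + 1) := by
        calc 2 * (a * b) = a * (2 * b) := by ring
          _ = a * (a + 1) := by rw [h']
      nlinarith [h2]
    · ring
end

section
/- For q ≤ 4 and any p ≥ q, the only positive integer triple x ≥ y ≥ z with x + y + z = p + q + 1 and xyz = pq is (up to order) {p, q, 1}. For every q > 4 there exists p such that a different triple exists: if q > 4 is odd, the triples ((q-1)²/2, q, 1) and (q(q-1)/2, (q-1)/2, 2) have equal sums and products; if q = ab with a > 1, b > 2, then with p = (b-1)(ab - a - b + 2) the triples (p, q, 1) and (b(ab - a - b + 2), b - 1, a) have equal sums and products. -/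
set_option maxHeartbeats 2000000 in
/-- For `q ≤ 4` and `p ≥ q ≥ 1`, the only positive integer triple `x ≥ y ≥ z` with
`x + y + z = p + q + 1` and `xyz = pq` is `{p, q, 1}`. For every `q > 4` a different
triple with the same sum and product exists: for odd `q > 4` the triples
`((q-1)²/2, q, 1)` and `(q(q-1)/2, (q-1)/2, 2)` have equal sums and products, and
for `q = ab` with `a > 1`, `b > 2`, taking `p = (b-1)(ab-a-b+2)`, the triples
`(p, q, 1)` and `(b(ab-a-b+2), b-1, a)` have equal sums and products. -/
theorem K_pq1_determined_iff :
    (∀ p q x y z : ℕ, 1 ≤ q → q ≤ 4 → q ≤ p →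
      x ≥ y → y ≥ z → 1 ≤ z →
      x + y + z = p + q + 1 → x * y * z = p * q →
      ({x, y, z} : Multiset ℕ) = {p, q, 1}) ∧
    (∀ q : ℕ, 4 < q → Odd q →
      (q - 1) ^ 2 / 2 + q + 1 = q * (q - 1) / 2 + (q - 1) / 2 + 2 ∧
      (q - 1) ^ 2 / 2 * q * 1 = q * (q - 1) / 2 * ((q - 1) / 2) * 2 ∧
      ({(q - 1) ^ 2 / 2, q, 1} : Multiset ℕ) ≠ {q * (q - 1) / 2, (q - 1) / 2, 2}) ∧
    (∀ a b : ℕ, 1 < a → 2 < b →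
      (b - 1) * (a * b - a - b + 2) + a * b + 1 =
        b * (a * b - a - b + 2) + (b - 1) + a ∧
      (b - 1) * (a * b - a - b + 2) * (a * b) * 1 =
        b * (a * b - a - b + 2) * (b - 1) * a ∧
      ({(b - 1) * (a * b - a - b + 2), a * b, 1} : Multiset ℕ) ≠
        {b * (a * b - a - b + 2), b - 1, a}) := by
  refine ⟨?_, ?_, ?_⟩
  · -- Part 1
    intro p q x y z hq1 hq4 hpq hxy hyz hz hS hP
    have hS' : (x:ℤ) + y + z = p + q + 1 := by exact_mod_cast hS
    have hP' : (x:ℤ) * y * z = p * q := by exact_mod_cast hP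
    have hxy' : (y:ℤ) ≤ x := by exact_mod_cast hxy
    have hyz' : (z:ℤ) ≤ y := by exact_mod_cast hyz
    have hp1 : 1 ≤ p := le_trans hq1 hpq
    rcases eq_or_lt_of_le hz with h1 | h2
    · -- z = 1
      have hz1 : z = 1 := h1.symm
      subst hz1
      have hxyS : (x:ℤ) + y = p + q := by push_cast at hS'; linarith
      have hxyP : (x:ℤ) * y = p * q := by push_cast at hP'; linarith
      have hfac : ((x:ℤ) - p) * ((y:ℤ) - p) = 0 := by
        linear_combination hxyP - (p:ℤ) * hxyS
      rcases mul_eq_zero.mp hfac with h | h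
      · have hxp : x = p := by exact_mod_cast sub_eq_zero.mp h
        have hyq : y = q := by
          have : (y:ℤ) = q := by rw [hxp] at hxyS; linarith
          exact_mod_cast this
        rw [hxp, hyq]
      · have hyp : y = p := by exact_mod_cast sub_eq_zero.mp h
        have hxq : x = q := by
          have : (x:ℤ) = q := by rw [hyp] at hxyS; linarith
          exact_mod_cast this
        have hpq' : p = q := by omega
        rw [hxq, hyp, hpq']
    · -- z ≥ 2
      exfalso
      have hz2 : 2 ≤ z := h2
      have hz2' : (2:ℤ) ≤ z := by exact_mod_cast hz2
      have key : ((x:ℤ) - p) * ((y:ℤ) - p) * ((z:ℤ) - p)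
          = (p:ℤ) * (((x:ℤ) - 1) * ((y:ℤ) - 1) * ((z:ℤ) - 1)) := by
        linear_combination (1 - (p:ℤ)) * hP' + ((p:ℤ)^2 - p) * hS'
      have f1 : (1:ℤ) ≤ (x:ℤ) - 1 := by linarith
      have f2 : (1:ℤ) ≤ (y:ℤ) - 1 := by linarith
      have f3 : (1:ℤ) ≤ (z:ℤ) - 1 := by linarith
      have h12 : (1:ℤ) ≤ ((x:ℤ) - 1) * ((y:ℤ) - 1) := by nlinarith
      have hA : (1:ℤ) ≤ ((x:ℤ) - 1) * ((y:ℤ) - 1) * ((z:ℤ) - 1) := by nlinarith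
      -- z < p
      have hzp : z < p := by
        by_contra hcon
        push_neg at hcon  -- p ≤ z
        have hple : p = 1 := by omega
        have hq1' : q = 1 := by omega
        have : 2 ≤ x * y * z := by
          calc 2 ≤ z := hz2
          _ = 1 * 1 * z := by ring
          _ ≤ x * y * z := by
              apply Nat.mul_le_mul (Nat.mul_le_mul _ _) le_rfl <;> omega
        rw [hP, hple, hq1'] at this
        omega
      have hzp' : (z:ℤ) - p < 0 := by
        have : (z:ℤ) < p := by exact_mod_cast hzp
        linarith
      have hp1' : (1:ℤ) ≤ p := by exact_mod_cast hp1
      have hprod : 0 < ((x:ℤ) - p) * ((y:ℤ) - p) * ((z:ℤ) - p) := by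
        rw [key]; nlinarith [hA, hp1']
      have hxyneg : ((x:ℤ) - p) * ((y:ℤ) - p) < 0 := by
        rcases le_or_gt 0 (((x:ℤ) - p) * ((y:ℤ) - p)) with hc | hc
        · exfalso
          have h0 : ((x:ℤ) - p) * ((y:ℤ) - p) * ((z:ℤ) - p) ≤ 0 :=
            mul_nonpos_of_nonneg_of_nonpos hc hzp'.le
          linarith [hprod]
        · exact hc
      have hxp : (p:ℤ) < x := by
        by_contra hcon
        push_neg at hcon
        have h0 : 0 ≤ ((p:ℤ) - x) * ((p:ℤ) - y) :=
          mul_nonneg (by linarith) (by linarith)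
        nlinarith [h0, hxyneg]
      have hxpn : p < x := by exact_mod_cast hxp
      -- now y + z ≤ q ≤ 4, y,z ≥ 2 forces y=z=2, q=4, x=p+1
      have hy2 : y = 2 := by omega
      have hz22 : z = 2 := by omega
      have hq44 : q = 4 := by omega
      have hx : x = p + 1 := by omega
      rw [hy2, hz22, hq44, hx] at hP
      omega
  · -- Part 2
    intro q hq hodd
    obtain ⟨k, hk⟩ := hodd
    have hk2 : 2 ≤ k := by omega
    have h1 : q - 1 = 2 * k := by omega
    have e1 : (q - 1) ^ 2 / 2 = 2 * k ^ 2 := by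
      rw [h1]
      have : (2 * k) ^ 2 = 2 * (2 * k ^ 2) := by ring
      rw [this, Nat.mul_div_cancel_left _ (by norm_num)]
    have e2 : q * (q - 1) / 2 = q * k := by
      rw [h1]
      have : q * (2 * k) = 2 * (q * k) := by ring
      rw [this, Nat.mul_div_cancel_left _ (by norm_num)]
    have e3 : (q - 1) / 2 = k := by omega
    rw [e1, e2, e3, hk]
    refine ⟨by ring, by ring, ?_⟩
    intro h
    have hmem : (1:ℕ) ∈ ({(2 * k + 1) * k, k, 2} : Multiset ℕ) := by
      rw [← h]; simp
    simp only [Multiset.insert_eq_cons, Multiset.mem_cons, Multiset.mem_singleton] at hmem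
    have hkk : 2 ≤ (2 * k + 1) * k := by nlinarith
    rcases hmem with h' | h' | h' <;> omega
  · -- Part 3
    intro a b ha hb
    obtain ⟨A, rfl⟩ : ∃ A, a = A + 2 := ⟨a - 2, by omega⟩
    obtain ⟨B, rfl⟩ : ∃ B, b = B + 3 := ⟨b - 3, by omega⟩
    have hm : (A + 2) * (B + 3) - (A + 2) - (B + 3) + 2 = A * B + 2 * A + B + 3 := by
      have h : (A + 2) * (B + 3) = A * B + 3 * A + 2 * B + 6 := by ring
      rw [h]
      generalize A * B = t
      omega
    have hb1 : (B + 3) - 1 = B + 2 := by omega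
    rw [hm, hb1]
    refine ⟨by ring, by ring, ?_⟩
    intro h
    have hmem : (B + 3) * (A * B + 2 * A + B + 3)
        ∈ ({(B + 2) * (A * B + 2 * A + B + 3), (A + 2) * (B + 3), 1} : Multiset ℕ) := by
      rw [h]; simp
    simp only [Multiset.insert_eq_cons, Multiset.mem_cons, Multiset.mem_singleton] at hmem
    rcases hmem with h' | h' | h' <;> nlinarith
end
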